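/- arXiv:1510.04785 — 5 statements merged into one kernel-verified Lean document; each statement's English description precedes it below -/
import Mathlib

section
/- For every integer k, each of the following three functions Heis^ℤ(k) × Heis^ℤ(k) → ℤ is a ℤ-valued 2-cocycle on Heis^ℤ(k) (with trivial action on ℤ): (i) ((a₁,b₁,c₁),(a₂,b₂,c₂)) ↦ 2·c₁·b₂ + k·a₁·b₂²; (ii) ((a₁,b₁,c₁),(a₂,b₂,c₂)) ↦ 2·a₁·c₂ + k·a₁²·b₂; (iii) ((a₁,b₁,c₁),(a₂,b₂,c₂)) ↦ a₁·b₂. -/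
/-- The integer Heisenberg group `Heis k`: underlying set `ℤ³` with multiplication
`(a₁,b₁,c₁)·(a₂,b₂,c₂) = (a₁+a₂, b₁+b₂, c₁+c₂+k·a₁·b₂)`. -/
@[ext] structure Heis (k : ℤ) where
  a : ℤ
  b : ℤ
  c : ℤ

namespace Heis

variable {k : ℤ}

instance : Mul (Heis k) :=
  ⟨fun x y => ⟨x.a + y.a, x.b + y.b, x.c + y.c + k * x.a * y.b⟩⟩

instance : One (Heis k) := ⟨⟨0, 0, 0⟩⟩

instance : Inv (Heis k) := ⟨fun x => ⟨-x.a, -x.b, -x.c + k * x.a * x.b⟩⟩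

@[simp] theorem mul_def (x y : Heis k) :
    x * y = ⟨x.a + y.a, x.b + y.b, x.c + y.c + k * x.a * y.b⟩ := rfl

@[simp] theorem one_def : (1 : Heis k) = ⟨0, 0, 0⟩ := rfl

@[simp] theorem inv_def (x : Heis k) :
    x⁻¹ = ⟨-x.a, -x.b, -x.c + k * x.a * x.b⟩ := rfl

instance : Group (Heis k) where
  mul_assoc x y z := by ext <;> simp <;> ring
  one_mul x := by ext <;> simp
  mul_one x := by ext <;> simp
  inv_mul_cancel x := by ext <;> simp [mul_comm]

end Heis

/-- For every integer `k`, each of the functions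
`(γ₁,γ₂) ↦ 2c₁b₂ + k·a₁·b₂²`, `(γ₁,γ₂) ↦ 2a₁c₂ + k·a₁²·b₂`, `(γ₁,γ₂) ↦ a₁b₂`
is a `ℤ`-valued 2-cocycle on `Heis k` (with trivial action on `ℤ`). -/
theorem heis_three_cocycles (k : ℤ) :
    (∀ σ : Heis k → Heis k → ℤ,
      (∀ γ₁ γ₂ : Heis k, σ γ₁ γ₂ = 2 * γ₁.c * γ₂.b + k * γ₁.a * γ₂.b ^ 2) →
      ∀ γ₁ γ₂ γ₃ : Heis k,
        σ γ₂ γ₃ - σ (γ₁ * γ₂) γ₃ + σ γ₁ (γ₂ * γ₃) - σ γ₁ γ₂ = 0) ∧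
    (∀ σ : Heis k → Heis k → ℤ,
      (∀ γ₁ γ₂ : Heis k, σ γ₁ γ₂ = 2 * γ₁.a * γ₂.c + k * γ₁.a ^ 2 * γ₂.b) →
      ∀ γ₁ γ₂ γ₃ : Heis k,
        σ γ₂ γ₃ - σ (γ₁ * γ₂) γ₃ + σ γ₁ (γ₂ * γ₃) - σ γ₁ γ₂ = 0) ∧
    (∀ σ : Heis k → Heis k → ℤ,
      (∀ γ₁ γ₂ : Heis k, σ γ₁ γ₂ = γ₁.a * γ₂.b) →
      ∀ γ₁ γ₂ γ₃ : Heis k,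
        σ γ₂ γ₃ - σ (γ₁ * γ₂) γ₃ + σ γ₁ (γ₂ * γ₃) - σ γ₁ γ₂ = 0) := by
  refine ⟨fun σ h γ₁ γ₂ γ₃ => ?_, fun σ h γ₁ γ₂ γ₃ => ?_, fun σ h γ₁ γ₂ γ₃ => ?_⟩ <;> simp only [h, Heis.mul_def] <;> ring
end

section
/- Let k ∈ ℤ and let σ_ab be the 2-cocycle on Heis^ℤ(k) defined by σ_ab((a₁,b₁,c₁),(a₂,b₂,c₂)) = a₁·b₂. Then for every integer m, the cocycle m·σ_ab is a 2-coboundary on Heis^ℤ(k) (i.e. there exists β : Heis^ℤ(k) → ℤ with m·a₁·b₂ = β(γ₁) + β(γ₂) − β(γ₁·γ₂) for all γ₁,γ₂ ∈ Heis^ℤ(k)) if and only if k divides m. In particular, when k divides m with m = q·k, one may take β(a,b,c) = −q·c. -/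
/-! The cocycle `m·a₁b₂` vanishes on the centre `{(0,0,c)}`, so a primitive `β` is additive there:
`β(0,0,c) = c·β(0,0,1)`. Now `x = (1,0,0)` and `y = (0,1,0)` satisfy `xy = yx·(0,0,k)`, and comparing
the cocycle identity at `(x,y)` and at `(y,x)` gives `m = β(yx) − β(xy) = −k·β(0,0,1)`.
Conversely, for `m = q·k` the cocycle is the coboundary of `−q·c`, since the `c`-coordinate of
a product picks up exactly `k·a₁b₂`. -/

theorem Int.additive_eq_mul_apply_one (f : ℤ → ℤ) (hf : ∀ m n, f (m + n) = f m + f n) (n : ℤ) :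
    f n = n * f 1 := by
  simpa using map_zsmul (AddMonoidHom.mk' f hf) n 1

namespace Heis

variable {k m : ℤ} {β : Heis k → ℤ}

theorem coboundary_central_eq_mul
    (hβ : ∀ g h : Heis k, m * g.a * h.b = β g + β h - β (g * h)) (c : ℤ) :
    β ⟨0, 0, c⟩ = c * β ⟨0, 0, 1⟩ := by
  refine Int.additive_eq_mul_apply_one (fun c => β ⟨0, 0, c⟩) (fun c d => ?_) c
  have hcd := hβ ⟨0, 0, c⟩ ⟨0, 0, d⟩
  simp only [mul_zero, mul_def, add_zero] at hcd
  linarith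

theorem dvd_of_coboundary (hβ : ∀ g h : Heis k, m * g.a * h.b = β g + β h - β (g * h)) :
    k ∣ m := by
  have hxy := hβ ⟨1, 0, 0⟩ ⟨0, 1, 0⟩
  have hyx := hβ ⟨0, 1, 0⟩ ⟨1, 0, 0⟩
  have hcentral := hβ ⟨1, 1, 0⟩ ⟨0, 0, k⟩
  simp only [mul_def, mul_one, mul_zero, add_zero, zero_add] at hxy hyx hcentral
  refine ⟨-β ⟨0, 0, 1⟩, ?_⟩
  linear_combination hxy - hyx - hcentral - coboundary_central_eq_mul hβ k

theorem coboundary_neg_mul_c (q : ℤ) (hm : m = q * k) (g h : Heis k) :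
    m * g.a * h.b = -q * g.c + -q * h.c - -q * (g * h).c := by
  simp only [mul_def, hm]
  ring

end Heis

/-- For `k ∈ ℤ` and the cocycle `σ_ab(γ₁,γ₂) = a₁·b₂` on `Heis k`: for every integer `m`, the
cocycle `m·σ_ab` is a 2-coboundary if and only if `k ∣ m`; and when `m = q·k` the function
`β(a,b,c) = −q·c` is an explicit witness. -/
theorem heis_sigma_ab_coboundary_iff (k m : ℤ) :
    ((∃ β : Heis k → ℤ,
        ∀ γ₁ γ₂ : Heis k, m * γ₁.a * γ₂.b = β γ₁ + β γ₂ - β (γ₁ * γ₂)) ↔ k ∣ m) ∧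
    (∀ q : ℤ, m = q * k →
      ∀ γ₁ γ₂ : Heis k,
        m * γ₁.a * γ₂.b = (-q * γ₁.c) + (-q * γ₂.c) - (-q * (γ₁ * γ₂).c)) := by
  refine ⟨⟨fun ⟨_, hβ⟩ => Heis.dvd_of_coboundary hβ, ?_⟩, Heis.coboundary_neg_mul_c⟩
  rintro ⟨q, rfl⟩
  exact ⟨fun γ => -q * γ.c, Heis.coboundary_neg_mul_c q (mul_comm k q)⟩
end

section
/- For every nonzero integer k, the set of 4×4 rational matrices with rows (1, a, c/k, d/(2k)), (0, 1, b, b²/2), (0, 0, 1, b), (0, 0, 0, 1) for a, b, c, d ∈ ℤ is a subgroup of GL₄(ℚ); the map restricting such a matrix to its upper-left 3×3 block is a surjective group homomorphism from this subgroup onto the matrix realization of Heis^ℤ(k) (the 3×3 unipotent upper-triangular matrices with rows (1, a, c/k), (0, 1, b), (0, 0, 1), a,b,c ∈ ℤ), and its kernel, consisting of the matrices with a = b = c = 0, is isomorphic to ℤ and is central in the subgroup. -/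
open Matrix


noncomputable def heisM4 (k a b c d : ℤ) : Matrix (Fin 4) (Fin 4) ℚ :=
  !![1, (a : ℚ), (c : ℚ) / (k : ℚ), (d : ℚ) / (2 * (k : ℚ));
     0, 1, (b : ℚ), (b : ℚ) ^ 2 / 2;
     0, 0, 1, (b : ℚ);
     0, 0, 0, 1]

noncomputable def heisN3 (k a b c : ℤ) : Matrix (Fin 3) (Fin 3) ℚ :=
  !![1, (a : ℚ), (c : ℚ) / (k : ℚ); 0, 1, (b : ℚ); 0, 0, 1]

lemma heisM4_mul (k : ℤ) (hk : k ≠ 0) (a b c d a' b' c' d' : ℤ) :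
    heisM4 k a b c d * heisM4 k a' b' c' d' =
      heisM4 k (a + a') (b + b') (c + c' + k * a * b') (d + d' + k * a * b' ^ 2 + 2 * c * b') := by
  have hkq : (k : ℚ) ≠ 0 := Int.cast_ne_zero.2 hk
  ext i j
  fin_cases i <;> fin_cases j <;>
    simp [heisM4, Matrix.mul_apply, Fin.sum_univ_succ, vecHead, vecTail] <;>
    (try field_simp) <;> try ring

lemma heisM4_one (k : ℤ) : heisM4 k 0 0 0 0 = 1 := by
  ext i j; fin_cases i <;> fin_cases j <;>
    simp [heisM4, Matrix.one_apply, Fin.ext_iff, vecHead, vecTail] <;> decide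

lemma heisN3_mul (k : ℤ) (hk : k ≠ 0) (a b c a' b' c' : ℤ) :
    heisN3 k a b c * heisN3 k a' b' c' = heisN3 k (a + a') (b + b') (c + c' + k * a * b') := by
  have hkq : (k : ℚ) ≠ 0 := Int.cast_ne_zero.2 hk
  ext i j
  fin_cases i <;> fin_cases j <;>
    simp [heisN3, Matrix.mul_apply, Fin.sum_univ_succ, vecHead, vecTail] <;>
    (try field_simp) <;> try ring

lemma heisN3_one (k : ℤ) : heisN3 k 0 0 0 = 1 := by
  ext i j; fin_cases i <;> fin_cases j <;>
    simp [heisN3, Matrix.one_apply, Fin.ext_iff, vecHead, vecTail]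

lemma heisM4_mul_inv (k : ℤ) (hk : k ≠ 0) (a b c d : ℤ) :
    heisM4 k a b c d * heisM4 k (-a) (-b) (-c + k * a * b) (-d - k * a * b ^ 2 + 2 * c * b) = 1 := by
  rw [heisM4_mul k hk, ← heisM4_one k]
  congr 1 <;> ring

lemma heisM4_inv_mul (k : ℤ) (hk : k ≠ 0) (a b c d : ℤ) :
    heisM4 k (-a) (-b) (-c + k * a * b) (-d - k * a * b ^ 2 + 2 * c * b) * heisM4 k a b c d = 1 := by
  rw [heisM4_mul k hk, ← heisM4_one k]
  congr 1 <;> ring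

lemma heisN3_mul_inv (k : ℤ) (hk : k ≠ 0) (a b c : ℤ) :
    heisN3 k a b c * heisN3 k (-a) (-b) (-c + k * a * b) = 1 := by
  rw [heisN3_mul k hk, ← heisN3_one k]
  congr 1 <;> ring

lemma heisN3_inv_mul (k : ℤ) (hk : k ≠ 0) (a b c : ℤ) :
    heisN3 k (-a) (-b) (-c + k * a * b) * heisN3 k a b c = 1 := by
  rw [heisN3_mul k hk, ← heisN3_one k]
  congr 1 <;> ring

noncomputable def heisM4u (k : ℤ) (hk : k ≠ 0) (a b c d : ℤ) : GL (Fin 4) ℚ :=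
  ⟨heisM4 k a b c d, heisM4 k (-a) (-b) (-c + k * a * b) (-d - k * a * b ^ 2 + 2 * c * b),
    heisM4_mul_inv k hk a b c d, heisM4_inv_mul k hk a b c d⟩

noncomputable def heisN3u (k : ℤ) (hk : k ≠ 0) (a b c : ℤ) : GL (Fin 3) ℚ :=
  ⟨heisN3 k a b c, heisN3 k (-a) (-b) (-c + k * a * b),
    heisN3_mul_inv k hk a b c, heisN3_inv_mul k hk a b c⟩

/-- upper-left 3×3 block -/
def heisBl (A : Matrix (Fin 4) (Fin 4) ℚ) : Matrix (Fin 3) (Fin 3) ℚ :=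
  A.submatrix Fin.castSucc Fin.castSucc

lemma heisBl_M4 (k a b c d : ℤ) : heisBl (heisM4 k a b c d) = heisN3 k a b c := by
  ext i j
  fin_cases i <;> fin_cases j <;>
    simp [heisBl, heisM4, heisN3, vecHead, vecTail, Fin.castSucc, Fin.castAdd, Fin.castLE]

noncomputable def heisS (k : ℤ) (hk : k ≠ 0) : Subgroup (GL (Fin 4) ℚ) where
  carrier := {M | ∃ a b c d : ℤ, (M : Matrix (Fin 4) (Fin 4) ℚ) = heisM4 k a b c d}
  one_mem' := ⟨0, 0, 0, 0, by rw [Units.val_one, heisM4_one]⟩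
  mul_mem' := by
    rintro M N ⟨a, b, c, d, hM⟩ ⟨a', b', c', d', hN⟩
    exact ⟨a + a', b + b', c + c' + k * a * b', d + d' + k * a * b' ^ 2 + 2 * c * b',
      by rw [Units.val_mul, hM, hN, heisM4_mul k hk]⟩
  inv_mem' := by
    rintro M ⟨a, b, c, d, hM⟩
    refine ⟨-a, -b, -c + k * a * b, -d - k * a * b ^ 2 + 2 * c * b, ?_⟩
    have : (M : Matrix (Fin 4) (Fin 4) ℚ)⁻¹ =
        heisM4 k (-a) (-b) (-c + k * a * b) (-d - k * a * b ^ 2 + 2 * c * b) :=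
      Matrix.inv_eq_right_inv (by rw [hM]; exact heisM4_mul_inv k hk a b c d)
    rw [← this, Matrix.coe_units_inv]

noncomputable def heisT (k : ℤ) (hk : k ≠ 0) : Subgroup (GL (Fin 3) ℚ) where
  carrier := {N | ∃ a b c : ℤ, (N : Matrix (Fin 3) (Fin 3) ℚ) = heisN3 k a b c}
  one_mem' := ⟨0, 0, 0, by rw [Units.val_one, heisN3_one]⟩
  mul_mem' := by
    rintro M N ⟨a, b, c, hM⟩ ⟨a', b', c', hN⟩
    exact ⟨a + a', b + b', c + c' + k * a * b',
      by rw [Units.val_mul, hM, hN, heisN3_mul k hk]⟩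
  inv_mem' := by
    rintro M ⟨a, b, c, hM⟩
    refine ⟨-a, -b, -c + k * a * b, ?_⟩
    have : (M : Matrix (Fin 3) (Fin 3) ℚ)⁻¹ = heisN3 k (-a) (-b) (-c + k * a * b) :=
      Matrix.inv_eq_right_inv (by rw [hM]; exact heisN3_mul_inv k hk a b c)
    rw [← this, Matrix.coe_units_inv]

lemma heisS_inv_coe (k : ℤ) (hk : k ≠ 0) (M : heisS k hk) (a b c d : ℤ)
    (hM : ((M : GL (Fin 4) ℚ) : Matrix (Fin 4) (Fin 4) ℚ) = heisM4 k a b c d) :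
    (((M⁻¹ : heisS k hk) : GL (Fin 4) ℚ) : Matrix (Fin 4) (Fin 4) ℚ) =
      heisM4 k (-a) (-b) (-c + k * a * b) (-d - k * a * b ^ 2 + 2 * c * b) := by
  have h1 : ((M : GL (Fin 4) ℚ) : Matrix (Fin 4) (Fin 4) ℚ)⁻¹ =
      heisM4 k (-a) (-b) (-c + k * a * b) (-d - k * a * b ^ 2 + 2 * c * b) :=
    Matrix.inv_eq_right_inv (by rw [hM]; exact heisM4_mul_inv k hk a b c d)
  rw [← h1]
  norm_cast

noncomputable def heisF (k : ℤ) (hk : k ≠ 0) : heisS k hk →* heisT k hk :=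
  MonoidHom.mk'
    (fun M =>
      ⟨⟨heisBl ((M : GL (Fin 4) ℚ) : Matrix (Fin 4) (Fin 4) ℚ),
        heisBl (((M⁻¹ : heisS k hk) : GL (Fin 4) ℚ) : Matrix (Fin 4) (Fin 4) ℚ),
        by
          obtain ⟨a, b, c, d, hM⟩ := M.2
          rw [hM, heisS_inv_coe k hk M a b c d hM, heisBl_M4, heisBl_M4]
          exact heisN3_mul_inv k hk a b c,
        by
          obtain ⟨a, b, c, d, hM⟩ := M.2
          rw [hM, heisS_inv_coe k hk M a b c d hM, heisBl_M4, heisBl_M4]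
          exact heisN3_inv_mul k hk a b c⟩,
       by
        obtain ⟨a, b, c, d, hM⟩ := M.2
        exact ⟨a, b, c, show heisBl _ = _ by rw [hM, heisBl_M4]⟩⟩)
    (by
      intro M N
      apply Subtype.ext
      apply Units.ext
      show heisBl (((M * N : heisS k hk) : GL (Fin 4) ℚ) : Matrix (Fin 4) (Fin 4) ℚ) = _
      obtain ⟨a, b, c, d, hM⟩ := M.2
      obtain ⟨a', b', c', d', hN⟩ := N.2
      have : (((M * N : heisS k hk) : GL (Fin 4) ℚ) : Matrix (Fin 4) (Fin 4) ℚ) =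
          heisM4 k a b c d * heisM4 k a' b' c' d' := by
        rw [← hM, ← hN]; rfl
      show heisBl _ = heisBl _ * heisBl _
      rw [this, hM, hN, heisM4_mul k hk, heisBl_M4, heisBl_M4, heisBl_M4, heisN3_mul k hk])

lemma heisF_ker (k : ℤ) (hk : k ≠ 0) (M : heisS k hk) :
    M ∈ (heisF k hk).ker ↔ ∃ d : ℤ,
      ((M : GL (Fin 4) ℚ) : Matrix (Fin 4) (Fin 4) ℚ) = heisM4 k 0 0 0 d := by
  have hkq : (k : ℚ) ≠ 0 := Int.cast_ne_zero.2 hk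
  rw [MonoidHom.mem_ker]
  constructor
  · intro h
    obtain ⟨a, b, c, d, hM⟩ := M.2
    have hval : heisBl ((M : GL (Fin 4) ℚ) : Matrix (Fin 4) (Fin 4) ℚ) = 1 := by
      exact congrArg (fun x : heisT k hk => ((x : GL (Fin 3) ℚ) : Matrix (Fin 3) (Fin 3) ℚ)) h
    rw [hM, heisBl_M4] at hval
    have h01 := congrFun (congrFun hval 0) 1
    have h12 := congrFun (congrFun hval 1) 2
    have h02 := congrFun (congrFun hval 0) 2
    simp [heisN3, Matrix.one_apply, vecHead, vecTail] at h01 h12 h02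
    have ha : a = 0 := by exact_mod_cast h01
    have hb : b = 0 := by exact_mod_cast h12
    have hc : c = 0 := h02.resolve_right hk
    exact ⟨d, by rw [hM, ha, hb, hc]⟩
  · rintro ⟨d, hM⟩
    apply Subtype.ext
    apply Units.ext
    show heisBl _ = _
    rw [hM, heisBl_M4, heisN3_one]
    rfl

lemma heisM4_zero (k d : ℤ) : heisM4 k 0 0 0 d =
    !![1, 0, 0, (d : ℚ) / (2 * (k : ℚ)); 0, 1, 0, 0; 0, 0, 1, 0; 0, 0, 0, 1] := by
  ext i j
  fin_cases i <;> fin_cases j <;> norm_num [heisM4, vecHead, vecTail]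

noncomputable def heisPsi (k : ℤ) (hk : k ≠ 0) : Multiplicative ℤ →* (heisF k hk).ker :=
  MonoidHom.mk'
    (fun d =>
      ⟨⟨heisM4u k hk 0 0 0 (Multiplicative.toAdd d), ⟨0, 0, 0, Multiplicative.toAdd d, rfl⟩⟩,
        (heisF_ker k hk _).mpr ⟨Multiplicative.toAdd d, rfl⟩⟩)
    (by
      intro d e
      apply Subtype.ext
      apply Subtype.ext
      apply Units.ext
      show heisM4 k 0 0 0 (Multiplicative.toAdd (d * e)) =
        heisM4 k 0 0 0 (Multiplicative.toAdd d) * heisM4 k 0 0 0 (Multiplicative.toAdd e)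
      rw [heisM4_mul k hk, toAdd_mul]
      congr 1 <;> ring)

lemma heisPsi_bij (k : ℤ) (hk : k ≠ 0) : Function.Bijective (heisPsi k hk) := by
  have hkq : (k : ℚ) ≠ 0 := Int.cast_ne_zero.2 hk
  constructor
  · intro d e h
    have hval : heisM4 k 0 0 0 (Multiplicative.toAdd d) =
        heisM4 k 0 0 0 (Multiplicative.toAdd e) :=
      congrArg (fun x : (heisF k hk).ker =>
        (((x : heisS k hk) : GL (Fin 4) ℚ) : Matrix (Fin 4) (Fin 4) ℚ)) h
    have h03 := congrFun (congrFun hval 0) 3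
    simp [heisM4, vecHead, vecTail] at h03
    have h2 : ((Multiplicative.toAdd d : ℤ) : ℚ) = ((Multiplicative.toAdd e : ℤ) : ℚ) := by
      field_simp at h03
      exact_mod_cast h03
    exact Multiplicative.toAdd.injective (by exact_mod_cast h2)
  · intro x
    obtain ⟨d, hx⟩ := (heisF_ker k hk x.1).mp x.2
    refine ⟨Multiplicative.ofAdd d, ?_⟩
    apply Subtype.ext
    apply Subtype.ext
    apply Units.ext
    exact hx.symm

lemma heis_ker_central (k : ℤ) (hk : k ≠ 0) :
    (heisF k hk).ker ≤ Subgroup.center (heisS k hk) := by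
  intro x hx
  rw [Subgroup.mem_center_iff]
  intro g
  obtain ⟨d, hx'⟩ := (heisF_ker k hk x).mp hx
  obtain ⟨a, b, c, e, hg⟩ := g.2
  apply Subtype.ext
  apply Units.ext
  show ((g : GL (Fin 4) ℚ) : Matrix (Fin 4) (Fin 4) ℚ) * _ = ((x : GL (Fin 4) ℚ) : Matrix (Fin 4) (Fin 4) ℚ) * _
  rw [hg, hx', heisM4_mul k hk, heisM4_mul k hk]
  congr 1 <;> ring

/-- For `k ≠ 0`, the 4×4 rational matrices with rows `(1, a, c/k, d/(2k))`, `(0,1,b,b²/2)`,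
`(0,0,1,b)`, `(0,0,0,1)`, `a,b,c,d ∈ ℤ`, form a subgroup of `GL₄(ℚ)`; restriction to the
upper-left 3×3 block is a surjective group homomorphism onto the matrix realization of
`Heis^ℤ(k)` (the 3×3 unipotent matrices with rows `(1,a,c/k)`, `(0,1,b)`, `(0,0,1)`,
`a,b,c ∈ ℤ`), and its kernel (the matrices with `a = b = c = 0`) is isomorphic to `ℤ` and
central. -/
theorem heis_extension_bc_matrix (k : ℤ) (hk : k ≠ 0) :
    ∃ S : Subgroup (GL (Fin 4) ℚ),
      (S : Set (GL (Fin 4) ℚ)) =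
        {M : GL (Fin 4) ℚ | ∃ a b c d : ℤ, (M : Matrix (Fin 4) (Fin 4) ℚ) =
          !![1, (a : ℚ), (c : ℚ) / (k : ℚ), (d : ℚ) / (2 * (k : ℚ));
             0, 1, (b : ℚ), (b : ℚ) ^ 2 / 2;
             0, 0, 1, (b : ℚ);
             0, 0, 0, 1]} ∧
      ∃ T : Subgroup (GL (Fin 3) ℚ),
        (T : Set (GL (Fin 3) ℚ)) =
          {N : GL (Fin 3) ℚ | ∃ a b c : ℤ, (N : Matrix (Fin 3) (Fin 3) ℚ) =
            !![1, (a : ℚ), (c : ℚ) / (k : ℚ); 0, 1, (b : ℚ); 0, 0, 1]} ∧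
        ∃ f : S →* T,
          (∀ (M : S) (i j : Fin 3),
            ((f M : GL (Fin 3) ℚ) : Matrix (Fin 3) (Fin 3) ℚ) i j =
              ((M : GL (Fin 4) ℚ) : Matrix (Fin 4) (Fin 4) ℚ) i.castSucc j.castSucc) ∧
          Function.Surjective f ∧
          ((f.ker : Set S) =
            {M : S | ∃ d : ℤ, ((M : GL (Fin 4) ℚ) : Matrix (Fin 4) (Fin 4) ℚ) =
              !![1, 0, 0, (d : ℚ) / (2 * (k : ℚ));
                 0, 1, 0, 0;
                 0, 0, 1, 0;
                 0, 0, 0, 1]}) ∧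
          Nonempty (f.ker ≃* Multiplicative ℤ) ∧
          f.ker ≤ Subgroup.center S := by
  refine ⟨heisS k hk, rfl, heisT k hk, rfl, heisF k hk, fun M i j => rfl, ?_, ?_, ?_,
    heis_ker_central k hk⟩
  · -- surjectivity
    intro N
    obtain ⟨a, b, c, hN⟩ := N.2
    refine ⟨⟨heisM4u k hk a b c 0, ⟨a, b, c, 0, rfl⟩⟩, ?_⟩
    apply Subtype.ext
    apply Units.ext
    show heisBl (heisM4 k a b c 0) = _
    rw [heisBl_M4, hN]
  · -- kernel set
    ext M
    rw [SetLike.mem_coe, heisF_ker k hk M]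
    constructor
    · rintro ⟨d, hM⟩; exact ⟨d, by rw [hM, heisM4_zero]⟩
    · rintro ⟨d, hM⟩; exact ⟨d, by rw [hM, heisM4_zero]⟩
  · exact ⟨(MulEquiv.ofBijective (heisPsi k hk) (heisPsi_bij k hk)).symm⟩
end

section
/- For every nonzero integer k, the set of 4×4 rational matrices with rows (1, a, a²/2, d/(2k)), (0, 1, a, c/k), (0, 0, 1, b), (0, 0, 0, 1) for a, b, c, d ∈ ℤ is a subgroup of GL₄(ℚ); the map restricting such a matrix to its lower-right 3×3 block is a surjective group homomorphism from this subgroup onto the matrix realization of Heis^ℤ(k) (the 3×3 unipotent upper-triangular matrices with rows (1, a, c/k), (0, 1, b), (0, 0, 1), a,b,c ∈ ℤ), and its kernel, consisting of the matrices with a = b = c = 0, is isomorphic to ℤ and is central in the subgroup. -/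
/-!
Multiplying the 4×4 matrices gives the parameter law
`(a,b,c,d)(a',b',c',d') = (a+a', b+b', c+c'+k a b', d+d'+2 a c'+k a² b')`,
whose first three coordinates are the law of `Heis^ℤ(k)`. Every such matrix has first column
`e₀`, so passing to the lower-right 3×3 block is multiplicative. Its kernel is `a = b = c = 0`,
where the law becomes `d + d'` and is symmetric against any other factor.
-/

open Matrix

section LowerRightBlock

variable {R : Type*} [Semiring R] {n : ℕ}

theorem Matrix.submatrix_succ_mul_of_forall_succ_zero {A B : Matrix (Fin (n + 1)) (Fin (n + 1)) R}
    (hA : ∀ i : Fin n, A i.succ 0 = 0) :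
    (A * B).submatrix Fin.succ Fin.succ =
      A.submatrix Fin.succ Fin.succ * B.submatrix Fin.succ Fin.succ := by
  ext i j
  simp [Matrix.mul_apply, Fin.sum_univ_succ, hA]

def lowerRightBlockHom (S : Subgroup (GL (Fin (n + 1)) R))
    (hS : ∀ M ∈ S, ∀ i : Fin n, (M : Matrix (Fin (n + 1)) (Fin (n + 1)) R) i.succ 0 = 0) :
    S →* GL (Fin n) R where
  toFun M :=
    { val := ((M : GL (Fin (n + 1)) R) : Matrix (Fin (n + 1)) (Fin (n + 1)) R).submatrix
        Fin.succ Fin.succ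
      inv := ((M⁻¹ : GL (Fin (n + 1)) R) : Matrix (Fin (n + 1)) (Fin (n + 1)) R).submatrix
        Fin.succ Fin.succ
      val_inv := by
        rw [← submatrix_succ_mul_of_forall_succ_zero (hS _ M.2), Units.mul_inv,
          submatrix_one _ (Fin.succ_injective _)]
      inv_val := by
        rw [← submatrix_succ_mul_of_forall_succ_zero (hS _ (inv_mem M.2)), Units.inv_mul,
          submatrix_one _ (Fin.succ_injective _)] }
  map_one' := Units.ext (submatrix_one _ (Fin.succ_injective _))
  map_mul' M N := Units.ext (submatrix_succ_mul_of_forall_succ_zero (hS _ M.2))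

theorem lowerRightBlockHom_apply_coe (S : Subgroup (GL (Fin (n + 1)) R))
    (hS : ∀ M ∈ S, ∀ i : Fin n, (M : Matrix (Fin (n + 1)) (Fin (n + 1)) R) i.succ 0 = 0)
    (M : S) :
    ((lowerRightBlockHom S hS M : GL (Fin n) R) : Matrix (Fin n) (Fin n) R) =
      ((M : GL (Fin (n + 1)) R) : Matrix (Fin (n + 1)) (Fin (n + 1)) R).submatrix
        Fin.succ Fin.succ :=
  rfl

end LowerRightBlock

namespace HeisenbergExtension

variable (k : ℤ)

def heisMatrix (a b c : ℤ) : Matrix (Fin 3) (Fin 3) ℚ :=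
  !![1, (a : ℚ), (c : ℚ) / (k : ℚ); 0, 1, (b : ℚ); 0, 0, 1]

def extMatrix (a b c d : ℤ) : Matrix (Fin 4) (Fin 4) ℚ :=
  !![1, (a : ℚ), (a : ℚ) ^ 2 / 2, (d : ℚ) / (2 * (k : ℚ));
     0, 1, (a : ℚ), (c : ℚ) / (k : ℚ);
     0, 0, 1, (b : ℚ);
     0, 0, 0, 1]

theorem extMatrix_succ_zero (a b c d : ℤ) (i : Fin 3) : extMatrix k a b c d i.succ 0 = 0 := by
  fin_cases i <;> rfl

theorem extMatrix_submatrix_succ (a b c d : ℤ) :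
    (extMatrix k a b c d).submatrix Fin.succ Fin.succ = heisMatrix k a b c := by
  ext i j
  fin_cases i <;> fin_cases j <;> rfl

theorem extMatrix_zero_zero_zero (d : ℤ) :
    extMatrix k 0 0 0 d =
      !![1, 0, 0, (d : ℚ) / (2 * (k : ℚ)); 0, 1, 0, 0; 0, 0, 1, 0; 0, 0, 0, 1] := by
  simp [extMatrix]

theorem heisMatrix_zero : heisMatrix k 0 0 0 = 1 := by
  ext i j
  fin_cases i <;> fin_cases j <;> simp [heisMatrix]

theorem extMatrix_zero : extMatrix k 0 0 0 0 = 1 := by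
  ext i j
  fin_cases i <;> fin_cases j <;> simp [extMatrix]

variable {k}

theorem heisMatrix_mul (hk : k ≠ 0) (a b c a' b' c' : ℤ) :
    heisMatrix k a b c * heisMatrix k a' b' c' =
      heisMatrix k (a + a') (b + b') (c + c' + k * a * b') := by
  ext i j
  fin_cases i <;> fin_cases j <;>
    simp [heisMatrix, Matrix.mul_apply, Fin.sum_univ_three] <;> field_simp <;> ring

theorem extMatrix_mul (hk : k ≠ 0) (a b c d a' b' c' d' : ℤ) :
    extMatrix k a b c d * extMatrix k a' b' c' d' =
      extMatrix k (a + a') (b + b') (c + c' + k * a * b')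
        (d + d' + 2 * a * c' + k * a ^ 2 * b') := by
  ext i j
  fin_cases i <;> fin_cases j <;>
    simp [extMatrix, Matrix.mul_apply, Fin.sum_univ_four] <;> field_simp <;> ring

theorem heisMatrix_eq_one_iff (hk : k ≠ 0) {a b c : ℤ} :
    heisMatrix k a b c = 1 ↔ a = 0 ∧ b = 0 ∧ c = 0 := by
  refine ⟨fun h => ?_, by rintro ⟨rfl, rfl, rfl⟩; exact heisMatrix_zero k⟩
  have h01 := congrFun (congrFun h 0) 1
  have h12 := congrFun (congrFun h 1) 2
  have h02 := congrFun (congrFun h 0) 2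
  simpa [heisMatrix, hk] using And.intro h01 (And.intro h12 h02)

theorem extMatrix_zero_zero_zero_injective (hk : k ≠ 0) :
    Function.Injective (extMatrix k 0 0 0) := by
  intro d d' h
  have h03 := congrFun (congrFun h 0) 3
  simpa [extMatrix, hk] using h03

theorem extMatrix_mul_inv (hk : k ≠ 0) (a b c d : ℤ) :
    extMatrix k a b c d * extMatrix k (-a) (-b) (k * a * b - c) (2 * a * c - k * a ^ 2 * b - d) =
      1 := by
  rw [extMatrix_mul hk, ← extMatrix_zero k]
  congr 1 <;> ring

theorem extMatrix_inv_mul (hk : k ≠ 0) (a b c d : ℤ) :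
    extMatrix k (-a) (-b) (k * a * b - c) (2 * a * c - k * a ^ 2 * b - d) * extMatrix k a b c d =
      1 := by
  rw [extMatrix_mul hk, ← extMatrix_zero k]
  congr 1 <;> ring

theorem heisMatrix_mul_inv (hk : k ≠ 0) (a b c : ℤ) :
    heisMatrix k a b c * heisMatrix k (-a) (-b) (k * a * b - c) = 1 := by
  rw [heisMatrix_mul hk, ← heisMatrix_zero k]
  congr 1 <;> ring

theorem extMatrix_zero_zero_zero_commute (hk : k ≠ 0) (d a b c e : ℤ) :
    Commute (extMatrix k 0 0 0 d) (extMatrix k a b c e) := by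
  rw [Commute, SemiconjBy, extMatrix_mul hk, extMatrix_mul hk]
  congr 1 <;> ring

def extUnit (hk : k ≠ 0) (a b c d : ℤ) : GL (Fin 4) ℚ :=
  ⟨extMatrix k a b c d, _, extMatrix_mul_inv hk a b c d, extMatrix_inv_mul hk a b c d⟩

def heisSubgroup (hk : k ≠ 0) : Subgroup (GL (Fin 3) ℚ) where
  carrier := {N | ∃ a b c : ℤ, (N : Matrix (Fin 3) (Fin 3) ℚ) = heisMatrix k a b c}
  one_mem' := ⟨0, 0, 0, (heisMatrix_zero k).symm⟩
  mul_mem' := by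
    rintro M N ⟨a, b, c, hM⟩ ⟨a', b', c', hN⟩
    exact ⟨_, _, _, by rw [Units.val_mul, hM, hN, heisMatrix_mul hk]⟩
  inv_mem' := by
    rintro N ⟨a, b, c, hN⟩
    refine ⟨-a, -b, k * a * b - c, Units.inv_eq_of_mul_eq_one_right ?_⟩
    rw [hN, heisMatrix_mul_inv hk]

def extSubgroup (hk : k ≠ 0) : Subgroup (GL (Fin 4) ℚ) where
  carrier := {M | ∃ a b c d : ℤ, (M : Matrix (Fin 4) (Fin 4) ℚ) = extMatrix k a b c d}
  one_mem' := ⟨0, 0, 0, 0, (extMatrix_zero k).symm⟩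
  mul_mem' := by
    rintro M N ⟨a, b, c, d, hM⟩ ⟨a', b', c', d', hN⟩
    exact ⟨_, _, _, _, by rw [Units.val_mul, hM, hN, extMatrix_mul hk]⟩
  inv_mem' := by
    rintro M ⟨a, b, c, d, hM⟩
    refine ⟨-a, -b, k * a * b - c, 2 * a * c - k * a ^ 2 * b - d,
      Units.inv_eq_of_mul_eq_one_right ?_⟩
    rw [hM, extMatrix_mul_inv hk]

theorem extUnit_mem (hk : k ≠ 0) (a b c d : ℤ) : extUnit hk a b c d ∈ extSubgroup hk :=
  ⟨a, b, c, d, rfl⟩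

def restrictHom (hk : k ≠ 0) : extSubgroup hk →* heisSubgroup hk :=
  (lowerRightBlockHom (extSubgroup hk) fun _ ⟨a, b, c, d, hM⟩ i => by
      rw [hM, extMatrix_succ_zero]).codRestrict _ fun M => by
    obtain ⟨a, b, c, d, hM⟩ := M.2
    exact ⟨a, b, c, by rw [lowerRightBlockHom_apply_coe, hM, extMatrix_submatrix_succ]⟩

theorem restrictHom_surjective (hk : k ≠ 0) : Function.Surjective (restrictHom hk) := by
  rintro ⟨N, a, b, c, hN⟩
  refine ⟨⟨extUnit hk a b c 0, extUnit_mem hk a b c 0⟩, Subtype.ext (Units.ext ?_)⟩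
  exact (extMatrix_submatrix_succ k a b c 0).trans hN.symm

theorem mem_ker_restrictHom (hk : k ≠ 0) {M : extSubgroup hk} :
    M ∈ (restrictHom hk).ker ↔
      ∃ d : ℤ, ((M : GL (Fin 4) ℚ) : Matrix (Fin 4) (Fin 4) ℚ) = extMatrix k 0 0 0 d := by
  rw [MonoidHom.mem_ker, Subtype.ext_iff, Units.ext_iff]
  change ((M : GL (Fin 4) ℚ) : Matrix (Fin 4) (Fin 4) ℚ).submatrix Fin.succ Fin.succ = 1 ↔ _
  constructor
  · obtain ⟨a, b, c, d, hM⟩ := M.2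
    rw [hM, extMatrix_submatrix_succ, heisMatrix_eq_one_iff hk]
    rintro ⟨rfl, rfl, rfl⟩
    exact ⟨d, rfl⟩
  · rintro ⟨d, hM⟩
    rw [hM, extMatrix_submatrix_succ, heisMatrix_zero]

theorem ker_restrictHom_le_center (hk : k ≠ 0) :
    (restrictHom hk).ker ≤ Subgroup.center (extSubgroup hk) := by
  intro M hM
  obtain ⟨d, hMd⟩ := (mem_ker_restrictHom hk).1 hM
  refine Subgroup.mem_center_iff.2 fun N => Subtype.ext (Units.ext ?_)
  obtain ⟨a, b, c, e, hN⟩ := N.2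
  simp only [Subgroup.coe_mul, Units.val_mul, hMd, hN]
  exact (extMatrix_zero_zero_zero_commute hk d a b c e).symm.eq

def intToKer (hk : k ≠ 0) : Multiplicative ℤ →* (restrictHom hk).ker where
  toFun d := ⟨⟨extUnit hk 0 0 0 d.toAdd, extUnit_mem hk 0 0 0 d.toAdd⟩,
    (mem_ker_restrictHom hk).2 ⟨d.toAdd, rfl⟩⟩
  map_one' := Subtype.ext (Subtype.ext (Units.ext (extMatrix_zero k)))
  map_mul' d d' := by
    refine Subtype.ext (Subtype.ext (Units.ext ?_))
    change extMatrix k 0 0 0 (d.toAdd + d'.toAdd) =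
      extMatrix k 0 0 0 d.toAdd * extMatrix k 0 0 0 d'.toAdd
    rw [extMatrix_mul hk]
    simp

theorem intToKer_bijective (hk : k ≠ 0) : Function.Bijective (intToKer hk) := by
  refine ⟨fun d d' h => ?_, fun M => ?_⟩
  · have h' : extMatrix k 0 0 0 d.toAdd = extMatrix k 0 0 0 d'.toAdd :=
      congrArg (fun M : (restrictHom hk).ker =>
        (((M : extSubgroup hk) : GL (Fin 4) ℚ) : Matrix (Fin 4) (Fin 4) ℚ)) h
    exact Multiplicative.toAdd.injective (extMatrix_zero_zero_zero_injective hk h')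
  · obtain ⟨d, hM⟩ := (mem_ker_restrictHom hk).1 M.2
    exact ⟨Multiplicative.ofAdd d, Subtype.ext (Subtype.ext (Units.ext hM.symm))⟩

end HeisenbergExtension

open HeisenbergExtension

/-- For `k ≠ 0`, the 4×4 rational matrices with rows `(1, a, a²/2, d/(2k))`, `(0,1,a,c/k)`,
`(0,0,1,b)`, `(0,0,0,1)`, `a,b,c,d ∈ ℤ`, form a subgroup of `GL₄(ℚ)`; restriction to the
lower-right 3×3 block is a surjective group homomorphism onto the matrix realization of
`Heis^ℤ(k)` (the 3×3 unipotent matrices with rows `(1,a,c/k)`, `(0,1,b)`, `(0,0,1)`,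
`a,b,c ∈ ℤ`), and its kernel (the matrices with `a = b = c = 0`) is isomorphic to `ℤ` and
central. -/
theorem heis_extension_ac_matrix (k : ℤ) (hk : k ≠ 0) :
    ∃ S : Subgroup (GL (Fin 4) ℚ),
      (S : Set (GL (Fin 4) ℚ)) =
        {M : GL (Fin 4) ℚ | ∃ a b c d : ℤ, (M : Matrix (Fin 4) (Fin 4) ℚ) =
          !![1, (a : ℚ), (a : ℚ) ^ 2 / 2, (d : ℚ) / (2 * (k : ℚ));
             0, 1, (a : ℚ), (c : ℚ) / (k : ℚ);
             0, 0, 1, (b : ℚ);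
             0, 0, 0, 1]} ∧
      ∃ T : Subgroup (GL (Fin 3) ℚ),
        (T : Set (GL (Fin 3) ℚ)) =
          {N : GL (Fin 3) ℚ | ∃ a b c : ℤ, (N : Matrix (Fin 3) (Fin 3) ℚ) =
            !![1, (a : ℚ), (c : ℚ) / (k : ℚ); 0, 1, (b : ℚ); 0, 0, 1]} ∧
        ∃ f : S →* T,
          (∀ (M : S) (i j : Fin 3),
            ((f M : GL (Fin 3) ℚ) : Matrix (Fin 3) (Fin 3) ℚ) i j =
              ((M : GL (Fin 4) ℚ) : Matrix (Fin 4) (Fin 4) ℚ) i.succ j.succ) ∧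
          Function.Surjective f ∧
          ((f.ker : Set S) =
            {M : S | ∃ d : ℤ, ((M : GL (Fin 4) ℚ) : Matrix (Fin 4) (Fin 4) ℚ) =
              !![1, 0, 0, (d : ℚ) / (2 * (k : ℚ));
                 0, 1, 0, 0;
                 0, 0, 1, 0;
                 0, 0, 0, 1]}) ∧
          Nonempty (f.ker ≃* Multiplicative ℤ) ∧
          f.ker ≤ Subgroup.center S := by
  refine ⟨extSubgroup hk, rfl, heisSubgroup hk, rfl, restrictHom hk, fun _ _ _ => rfl,
    restrictHom_surjective hk, ?_, ⟨(MulEquiv.ofBijective _ (intToKer_bijective hk)).symm⟩,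
    ker_restrictHom_le_center hk⟩
  ext M
  simp only [SetLike.mem_coe, mem_ker_restrictHom, Set.mem_ofPred_eq, extMatrix_zero_zero_zero]
end

section
/- For every integer k ≥ 1, the second group cohomology of the integer Heisenberg group Heis^ℤ(k) with coefficients in ℤ (with trivial Heis^ℤ(k)-action) is isomorphic, as an abelian group, to ℤ × ℤ × (ℤ/kℤ). -/
namespace groupCohomology

variable {R G : Type} [CommRing R] [Group G]

noncomputable def H2LinearEquivOfSurjective {A : Rep R G} {M : Type} [AddCommGroup M] [Module R M]
    (Φ : cocycles₂ A →ₗ[R] M) (hΦ : Function.Surjective Φ)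
    (hker : ∀ f, Φ f = 0 ↔ ⇑f ∈ coboundaries₂ A) : H2 A ≃ₗ[R] M :=
  have hπ : Function.Surjective (H2π A) := (ModuleCat.epi_iff_surjective _).1 inferInstance
  have hker' : LinearMap.ker (H2π A).hom = LinearMap.ker Φ := by
    ext f
    rw [LinearMap.mem_ker, LinearMap.mem_ker, hker]
    exact H2π_eq_zero_iff f
  ((H2π A).hom.quotKerEquivOfSurjective hπ).symm ≪≫ₗ Submodule.quotEquivOfEq _ _ hker' ≪≫ₗ
    Φ.quotKerEquivOfSurjective hΦ

variable {A : Type} [AddCommGroup A] [Module R A]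

theorem mem_cocycles₂_trivial_iff (f : G × G → A) :
    f ∈ cocycles₂ (Rep.trivial R G A) ↔
      ∀ g h j : G, f (g * h, j) + f (g, h) = f (h, j) + f (g, h * j) :=
  mem_cocycles₂_iff (A := Rep.trivial R G A) f

theorem d₁₂_trivial_apply_swap (x : G → A) {g h : G} (hgh : Commute g h) :
    (d₁₂ (Rep.trivial R G A)).hom x (g, h) = (d₁₂ (Rep.trivial R G A)).hom x (h, g) := by
  simp only [d₁₂_hom_apply, Representation.trivial_apply, hgh.eq]
  abel

@[ext]
structure CocycleExtension (f : cocycles₂ (Rep.trivial R G A)) where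
  fst : A
  snd : G

namespace CocycleExtension

variable {f : cocycles₂ (Rep.trivial R G A)}

instance : Mul (CocycleExtension f) :=
  ⟨fun p q => ⟨p.fst + q.fst + f (p.snd, q.snd), p.snd * q.snd⟩⟩

-- `f` is not assumed normalized, hence the correction by `f (1, 1)` here and in `Inv`.
instance : One (CocycleExtension f) := ⟨⟨-f (1, 1), 1⟩⟩

instance : Inv (CocycleExtension f) := ⟨fun p => ⟨-p.fst - f (p.snd⁻¹, p.snd) - f (1, 1), p.snd⁻¹⟩⟩

@[simp]
theorem mk_mul_mk (a b : A) (g h : G) :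
    (⟨a, g⟩ * ⟨b, h⟩ : CocycleExtension f) = ⟨a + b + f (g, h), g * h⟩ := rfl

@[simp]
theorem one_def : (1 : CocycleExtension f) = ⟨-f (1, 1), 1⟩ := rfl

instance : Group (CocycleExtension f) :=
  Group.ofLeftAxioms
    (fun p q r => by
      have := (mem_cocycles₂_trivial_iff (R := R) f).1 f.2 p.snd q.snd r.snd
      ext
      · change p.fst + q.fst + f (p.snd, q.snd) + r.fst + f (p.snd * q.snd, r.snd) =
          p.fst + (q.fst + r.fst + f (q.snd, r.snd)) + f (p.snd, q.snd * r.snd)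
        linear_combination (norm := abel_nf) this
      · exact mul_assoc _ _ _)
    (fun p => by
      ext
      · change -f (1, 1) + p.fst + f (1, p.snd) = p.fst
        rw [cocycles₂_map_one_fst f p.snd]
        abel
      · exact one_mul _)
    (fun p => by
      ext
      · change -p.fst - f (p.snd⁻¹, p.snd) - f (1, 1) + p.fst + f (p.snd⁻¹, p.snd) = -f (1, 1)
        abel
      · exact inv_mul_cancel _)

def sndHom (f : cocycles₂ (Rep.trivial R G A)) : CocycleExtension f →* G where
  toFun := snd
  map_one' := rfl
  map_mul' _ _ := rfl

theorem mk_pow (a : A) (g : G) (n : ℕ) :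
    (⟨a, g⟩ : CocycleExtension f) ^ n =
      ⟨n • a + ∑ i ∈ Finset.range n, f (g ^ i, g) - f (1, 1), g ^ n⟩ := by
  induction n with
  | zero => simp
  | succ n ih =>
    rw [pow_succ, ih, mk_mul_mk, Finset.sum_range_succ, succ_nsmul, pow_succ]
    congr 1
    abel

theorem commute_mk_mk_iff {g h : G} (hgh : Commute g h) (a b : A) :
    Commute (⟨a, g⟩ : CocycleExtension f) ⟨b, h⟩ ↔ f (g, h) = f (h, g) := by
  rw [Commute, SemiconjBy, mk_mul_mk, mk_mul_mk, hgh.eq, CocycleExtension.mk.injEq, add_comm a b]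
  simp

end CocycleExtension

theorem mem_coboundaries₂_of_section {f : cocycles₂ (Rep.trivial R G A)}
    (s : G →* CocycleExtension f) (hs : (CocycleExtension.sndHom f).comp s = MonoidHom.id G) :
    ⇑f ∈ coboundaries₂ (Rep.trivial R G A) := by
  have hsnd (g : G) : (s g).snd = g := DFunLike.congr_fun hs g
  refine ⟨fun g => -(s g).fst, funext fun ⟨g, h⟩ => ?_⟩
  have hmul := congrArg CocycleExtension.fst (map_mul s g h)
  change (s (g * h)).fst = (s g).fst + (s h).fst + f ((s g).snd, (s h).snd) at hmul
  rw [hsnd, hsnd] at hmul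
  change -(s h).fst - -(s (g * h)).fst + -(s g).fst = f (g, h)
  rw [hmul]
  abel

end groupCohomology

theorem zpow_mul_zpow_of_mul_eq {M : Type*} [Group M] {k : ℤ} {u v w : M} (huw : Commute u w)
    (hvw : Commute v w) (huv : u * v = v * u * w ^ k) (a b : ℤ) :
    u ^ a * v ^ b = v ^ b * u ^ a * w ^ (k * a * b) := by
  have h₁ : SemiconjBy u v (v * w ^ k) := by
    rw [SemiconjBy, huv, mul_assoc, mul_assoc, (huw.zpow_right k).eq]
  have h₂ : SemiconjBy (v ^ b) (u * w ^ (k * b)) u := by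
    have h := h₁.zpow_right b
    rw [SemiconjBy, (hvw.zpow_right k).mul_zpow, ← zpow_mul] at h
    rw [SemiconjBy, h, mul_assoc, ((huw.zpow_right (k * b)).eq).symm]
  have h := h₂.zpow_right a
  rw [SemiconjBy, (huw.zpow_right (k * b)).mul_zpow, ← zpow_mul] at h
  rw [← h, ← mul_assoc, mul_right_comm k]

namespace Heis

variable {k : ℤ} {M : Type*} [Group M] {u v w : M}

def lift (huw : Commute u w) (hvw : Commute v w) (huv : u * v = v * u * w ^ k) : Heis k →* M where
  toFun g := v ^ g.b * u ^ g.a * w ^ g.c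
  map_one' := by simp
  map_mul' g h := by
    have hw : Commute (v ^ h.b * u ^ h.a) (w ^ g.c) :=
      ((hvw.zpow_zpow _ _).mul_left (huw.zpow_zpow _ _))
    calc v ^ (g.b + h.b) * u ^ (g.a + h.a) * w ^ (g.c + h.c + k * g.a * h.b)
        = v ^ g.b * v ^ h.b * u ^ g.a * (u ^ h.a * w ^ (k * g.a * h.b)) * w ^ g.c * w ^ h.c := by
          group
      _ = v ^ g.b * (v ^ h.b * u ^ g.a * w ^ (k * g.a * h.b)) * u ^ h.a * w ^ g.c * w ^ h.c := by
          rw [((huw.zpow_zpow _ _).eq)]; group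
      _ = v ^ g.b * u ^ g.a * (v ^ h.b * u ^ h.a * w ^ g.c) * w ^ h.c := by
          rw [← zpow_mul_zpow_of_mul_eq huw hvw huv]; group
      _ = v ^ g.b * u ^ g.a * w ^ g.c * (v ^ h.b * u ^ h.a * w ^ h.c) := by
          rw [hw.eq]; group

@[simp]
theorem lift_apply (huw : Commute u w) (hvw : Commute v w) (huv : u * v = v * u * w ^ k)
    (g : Heis k) : lift huw hvw huv g = v ^ g.b * u ^ g.a * w ^ g.c := rfl

theorem comp_lift {M' : Type*} [Group M'] (φ : M →* M') (huw : Commute u w) (hvw : Commute v w)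
    (huv : u * v = v * u * w ^ k) :
    φ.comp (lift huw hvw huv) =
      lift (huw.map φ) (hvw.map φ) (by rw [← map_mul, huv, map_mul, map_mul, map_zpow]) := by
  ext g
  simp

def X : Heis k := ⟨1, 0, 0⟩
def Y : Heis k := ⟨0, 1, 0⟩
def Z : Heis k := ⟨0, 0, 1⟩

theorem X_zpow (n : ℤ) : (X : Heis k) ^ n = ⟨n, 0, 0⟩ := by
  induction n using Int.induction_on with
  | zero => rfl
  | succ m ih => rw [zpow_add_one, ih]; ext <;> simp [X]
  | pred m ih => rw [zpow_sub_one, ih]; ext <;> simp [X, sub_eq_add_neg]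

theorem Y_zpow (n : ℤ) : (Y : Heis k) ^ n = ⟨0, n, 0⟩ := by
  induction n using Int.induction_on with
  | zero => rfl
  | succ m ih => rw [zpow_add_one, ih]; ext <;> simp [Y]
  | pred m ih => rw [zpow_sub_one, ih]; ext <;> simp [Y, sub_eq_add_neg]

theorem Z_zpow (n : ℤ) : (Z : Heis k) ^ n = ⟨0, 0, n⟩ := by
  induction n using Int.induction_on with
  | zero => rfl
  | succ m ih => rw [zpow_add_one, ih]; ext <;> simp [Z]
  | pred m ih => rw [zpow_sub_one, ih]; ext <;> simp [Z, sub_eq_add_neg]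

theorem Z_pow (n : ℕ) : (Z : Heis k) ^ n = ⟨0, 0, n⟩ := by
  rw [← zpow_natCast, Z_zpow]

theorem commute_X_Z : Commute (X : Heis k) Z := by
  ext <;> simp [X, Z]

theorem commute_Y_Z : Commute (Y : Heis k) Z := by
  ext <;> simp [Y, Z]

theorem X_mul_Y : (X : Heis k) * Y = Y * X * Z ^ k := by
  ext <;> simp [X, Y, Z_zpow]

theorem lift_X_Y_Z : lift commute_X_Z commute_Y_Z X_mul_Y = MonoidHom.id (Heis k) := by
  ext g <;> simp [X_zpow, Y_zpow, Z_zpow]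

end Heis

def choose2 (n : ℤ) : ℤ := n * (n - 1) / 2

theorem choose2_add (m n : ℤ) : choose2 (m + n) = choose2 m + choose2 n + m * n := by
  have two_mul_choose2 (n : ℤ) : 2 * choose2 n = n * (n - 1) :=
    Int.mul_ediv_cancel' (Int.even_mul_pred_self n).two_dvd
  have := two_mul_choose2 (m + n)
  rw [show (m + n) * (m + n - 1) = m * (m - 1) + n * (n - 1) + 2 * (m * n) by ring,
    ← two_mul_choose2, ← two_mul_choose2] at this
  linarith

namespace Heis

open groupCohomology Finset

section

variable {R A : Type} [CommRing R] [AddCommGroup A] [Module R A]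

-- `alpha N f = N • m` is the condition for `X * Y = Y * X * Z ^ N` to lift to
-- `⟨0, X⟩ * ⟨0, Y⟩ = ⟨0, Y⟩ * ⟨0, X⟩ * ⟨m, Z⟩ ^ N` in `CocycleExtension f`.
def alpha (N : ℕ) : (Heis N × Heis N → A) →+ A where
  toFun f := f (X, Y) - f (Y, X) - f (Y * X, Z ^ N) - ∑ i ∈ range N, f (Z ^ i, Z) + f (1, 1)
  map_zero' := by simp
  map_add' f₁ f₂ := by
    simp only [Pi.add_apply, sum_add_distrib]
    abel

theorem alpha_apply (N : ℕ) (f : Heis N × Heis N → A) :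
    alpha N f = f (X, Y) - f (Y, X) - f (Y * X, Z ^ N) - ∑ i ∈ range N, f (Z ^ i, Z) + f (1, 1) :=
  rfl

theorem mem_coboundaries₂_of_alpha_eq_nsmul {N : ℕ} (f : cocycles₂ (Rep.trivial R (Heis N) A))
    (hXZ : f (X, Z) = f (Z, X)) (hYZ : f (Y, Z) = f (Z, Y)) (m : A) (hα : alpha N f = N • m) :
    ⇑f ∈ coboundaries₂ (Rep.trivial R (Heis N) A) := by
  let u : CocycleExtension f := ⟨0, X⟩
  let v : CocycleExtension f := ⟨0, Y⟩
  let w : CocycleExtension f := ⟨m, Z⟩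
  have huw : Commute u w := (CocycleExtension.commute_mk_mk_iff commute_X_Z _ _).2 hXZ
  have hvw : Commute v w := (CocycleExtension.commute_mk_mk_iff commute_Y_Z _ _).2 hYZ
  have huv : u * v = v * u * w ^ (N : ℤ) := by
    rw [zpow_natCast, CocycleExtension.mk_pow]
    simp only [u, v, CocycleExtension.mk_mul_mk]
    congr 1
    · rw [alpha_apply] at hα
      rw [← hα]
      abel
    · rw [← zpow_natCast, X_mul_Y]
  exact mem_coboundaries₂_of_section (lift huw hvw huv) (by rw [comp_lift]; exact lift_X_Y_Z)

theorem alpha_d₁₂ (N : ℕ) (x : Heis N → A) :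
    alpha N ((d₁₂ (Rep.trivial R (Heis N) A)).hom x) = -(N • x Z) := by
  have hsum : ∑ i ∈ range N, (d₁₂ (Rep.trivial R (Heis N) A)).hom x (Z ^ i, Z) =
      N • x Z + (x 1 - x (Z ^ N)) := by
    calc ∑ i ∈ range N, (d₁₂ (Rep.trivial R (Heis N) A)).hom x (Z ^ i, Z)
        = ∑ i ∈ range N, (x Z + (x (Z ^ i) - x (Z ^ (i + 1)))) := by
          refine sum_congr rfl fun i _ => ?_
          simp only [d₁₂_hom_apply, Representation.trivial_apply, pow_succ]
          abel
      _ = N • x Z + (x 1 - x (Z ^ N)) := by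
          rw [sum_add_distrib, sum_const, card_range, sum_range_sub', pow_zero]
  have hYX : (Y : Heis N) * X * Z ^ N = X * Y := by rw [X_mul_Y, zpow_natCast]
  rw [alpha_apply, hsum]
  simp only [d₁₂_hom_apply, Representation.trivial_apply, hYX, one_mul]
  abel

end

def invariants (N : ℕ) : (Heis N × Heis N → ℤ) →+ ℤ × ℤ × ZMod N :=
  let ev (p : Heis N × Heis N) := Pi.evalAddMonoidHom (fun _ => ℤ) p
  (ev (X, Z) - ev (Z, X)).prod ((ev (Y, Z) - ev (Z, Y)).prod ((Int.castAddHom _).comp (alpha N)))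

theorem invariants_apply (N : ℕ) (f : Heis N × Heis N → ℤ) :
    invariants N f = (f (X, Z) - f (Z, X), f (Y, Z) - f (Z, Y), ((alpha N f : ℤ) : ZMod N)) :=
  rfl

theorem invariants_eq_zero_iff (N : ℕ) (f : cocycles₂ (Rep.trivial ℤ (Heis N) ℤ)) :
    invariants N f = 0 ↔ ⇑f ∈ coboundaries₂ (Rep.trivial ℤ (Heis N) ℤ) := by
  constructor
  · intro hf
    simp only [invariants_apply, Prod.mk_eq_zero, sub_eq_zero,
      ZMod.intCast_zmod_eq_zero_iff_dvd] at hf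
    obtain ⟨hXZ, hYZ, m, hm⟩ := hf
    exact mem_coboundaries₂_of_alpha_eq_nsmul f hXZ hYZ m (by rw [hm, nsmul_eq_mul])
  · rintro ⟨x, hx⟩
    rw [← hx, invariants_apply, alpha_d₁₂, d₁₂_trivial_apply_swap x commute_X_Z,
      d₁₂_trivial_apply_swap x commute_Y_Z]
    simp

variable (N : ℕ)

-- The terms with a factor `N` correct the failure of `g.a * h.c` and `g.b * h.c` to be cocycles.
def cocycleXZ (p : Heis N × Heis N) : ℤ := p.1.a * p.2.c + N * choose2 p.1.a * p.2.b

def cocycleYZ (p : Heis N × Heis N) : ℤ :=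
  p.1.b * p.2.c - N * p.1.b * p.2.a * p.2.b - N * choose2 p.1.b * p.2.a

def cocycleXY (p : Heis N × Heis N) : ℤ := p.1.a * p.2.b

theorem cocycleXZ_mem : cocycleXZ N ∈ cocycles₂ (Rep.trivial ℤ (Heis N) ℤ) :=
  (mem_cocycles₂_trivial_iff _).2 fun g h l => by
    simp only [cocycleXZ, mul_def, choose2_add]
    ring

theorem cocycleYZ_mem : cocycleYZ N ∈ cocycles₂ (Rep.trivial ℤ (Heis N) ℤ) :=
  (mem_cocycles₂_trivial_iff _).2 fun g h l => by
    simp only [cocycleYZ, mul_def, choose2_add]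
    ring

theorem cocycleXY_mem : cocycleXY N ∈ cocycles₂ (Rep.trivial ℤ (Heis N) ℤ) :=
  (mem_cocycles₂_trivial_iff _).2 fun g h l => by
    simp only [cocycleXY, mul_def]
    ring

theorem invariants_cocycleXZ : invariants N (cocycleXZ N) = (1, 0, 0) := by
  simp only [invariants_apply, alpha_apply, Z_pow]
  simp [cocycleXZ, X, Y, Z, choose2]

theorem invariants_cocycleYZ : invariants N (cocycleYZ N) = (0, 1, 0) := by
  simp only [invariants_apply, alpha_apply, Z_pow]
  simp [cocycleYZ, X, Y, Z, choose2]

theorem invariants_cocycleXY : invariants N (cocycleXY N) = (0, 0, 1) := by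
  simp only [invariants_apply, alpha_apply, Z_pow]
  simp [cocycleXY, X, Y, Z]

theorem invariants_surjective :
    Function.Surjective fun f : cocycles₂ (Rep.trivial ℤ (Heis N) ℤ) => invariants N f := by
  rintro ⟨p, q, r⟩
  obtain ⟨r, rfl⟩ := ZMod.intCast_surjective r
  refine ⟨p • ⟨_, cocycleXZ_mem N⟩ + q • ⟨_, cocycleYZ_mem N⟩ + r • ⟨_, cocycleXY_mem N⟩, ?_⟩
  change invariants N (p • cocycleXZ N + q • cocycleYZ N + r • cocycleXY N) = _
  rw [map_add, map_add, map_zsmul, map_zsmul, map_zsmul, invariants_cocycleXZ,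
    invariants_cocycleYZ, invariants_cocycleXY]
  simp

end Heis

theorem heis_H2_general (k : ℕ) :
    Nonempty (groupCohomology.H2 (Rep.trivial ℤ (Heis (k : ℤ)) ℤ) ≃+ ℤ × ℤ × ZMod k) :=
  ⟨(groupCohomology.H2LinearEquivOfSurjective
    ((Heis.invariants k).toIntLinearMap ∘ₗ (groupCohomology.cocycles₂ _).subtype)
    (Heis.invariants_surjective k) (Heis.invariants_eq_zero_iff k)).toAddEquiv⟩

/-- For every integer `k ≥ 1`, the second group cohomology of `Heis k` with coefficients in the
trivial module `ℤ` is isomorphic, as an abelian group, to `ℤ × ℤ × (ℤ/kℤ)`. -/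
theorem heis_H2 (k : ℕ) (hk : 1 ≤ k) :
    Nonempty (groupCohomology.H2 (Rep.trivial ℤ (Heis (k : ℤ)) ℤ) ≃+ ℤ × ℤ × ZMod k) :=
  heis_H2_general k
end
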